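/- Let M > 0, Q ≠ 0 and μ := 8Q²/(9M²), and assume μ < 1. Then both functions s ↦ Λ₋(s) and s ↦ Λ₊(s) are strictly decreasing on the interval (μ, 1]: for μ < s₁ < s₂ ≤ 1 one has Λ₋(s₁) > Λ₋(s₂) and Λ₊(s₁) > Λ₊(s₂). -/

import Mathlib

/-!
With `v = √(1 - μ / s)`, which increases from `0` to `1` as `s` runs over `(μ, ∞)`, one has
`β = 9 s M² v²`, and `Λ₋`, `Λ₊` become `81 M⁴ / (256 Q⁶)` times `g v`, `g (-v)` respectively,
where `g v = (1 - 3v)(1 + v)³`. Since `g' v = -12 v (1 + v)²`, `g` decreases on `[0, ∞)` and increases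
on `[-1, 0]`, so both `Λ₋` and `Λ₊` decrease in `s`.
-/

noncomputable section

/-- `Λ₋`, defined for `β := 9sM² − 8Q² ≥ 0`. -/
def Λminus (M Q s : ℝ) : ℝ :=
  1 / (32 * s ^ 2 * Q ^ 6) *
    (8 * Q ^ 4 - (9 * s * M ^ 2 - 8 * Q ^ 2) * (9 * s * M ^ 2 - 8 * Q ^ 2 + 4 * Q ^ 2)
      - 3 * Real.sqrt (s * M ^ 2 * (9 * s * M ^ 2 - 8 * Q ^ 2) ^ 3))

/-- `Λ₊`, defined for `β := 9sM² − 8Q² ≥ 0`. -/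
def Λplus (M Q s : ℝ) : ℝ :=
  1 / (32 * s ^ 2 * Q ^ 6) *
    (8 * Q ^ 4 - (9 * s * M ^ 2 - 8 * Q ^ 2) * (9 * s * M ^ 2 - 8 * Q ^ 2 + 4 * Q ^ 2)
      + 3 * Real.sqrt (s * M ^ 2 * (9 * s * M ^ 2 - 8 * Q ^ 2) ^ 3))

open Set

def lambdaProfile (v : ℝ) : ℝ := (1 - 3 * v) * (1 + v) ^ 3

lemma hasDerivAt_lambdaProfile (v : ℝ) :
    HasDerivAt lambdaProfile (-12 * v * (1 + v) ^ 2) v := by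
  have h₁ : HasDerivAt (fun x : ℝ => 1 - 3 * x) (-3) v := by
    simpa using ((hasDerivAt_id v).const_mul 3).const_sub 1
  have h₂ : HasDerivAt (fun x : ℝ => (1 + x) ^ 3) (3 * (1 + v) ^ 2) v := by
    simpa using ((hasDerivAt_id v).const_add 1).fun_pow 3
  exact (h₁.mul h₂).congr_deriv (by ring)

lemma strictAntiOn_lambdaProfile : StrictAntiOn lambdaProfile (Ici 0) := by
  refine strictAntiOn_of_deriv_neg (convex_Ici 0) (by unfold lambdaProfile; fun_prop) ?_
  rw [interior_Ici]
  intro v (hv : 0 < v)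
  rw [(hasDerivAt_lambdaProfile v).deriv]
  nlinarith [pow_pos (by linarith : 0 < 1 + v) 2]

lemma strictMonoOn_lambdaProfile : StrictMonoOn lambdaProfile (Icc (-1) 0) := by
  refine strictMonoOn_of_deriv_pos (convex_Icc _ _) (by unfold lambdaProfile; fun_prop) ?_
  rw [interior_Icc]
  rintro v ⟨hv₁, hv₀⟩
  rw [(hasDerivAt_lambdaProfile v).deriv]
  nlinarith [pow_pos (by linarith : 0 < 1 + v) 2]

section ClosedForm

variable {M Q s v : ℝ}

lemma sqrt_mul_pow_three_eq (hv : 0 ≤ v) (hrel : 9 * s * M ^ 2 * (1 - v ^ 2) = 8 * Q ^ 2) :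
    √(s * M ^ 2 * (9 * s * M ^ 2 - 8 * Q ^ 2) ^ 3) = 27 * s ^ 2 * M ^ 4 * v ^ 3 := by
  rw [← hrel, show s * M ^ 2 * (9 * s * M ^ 2 - 9 * s * M ^ 2 * (1 - v ^ 2)) ^ 3
      = (27 * s ^ 2 * M ^ 4 * v ^ 3) ^ 2 by ring, Real.sqrt_sq (by positivity)]

lemma Λminus_eq (hQ : Q ≠ 0) (hv : 0 ≤ v) (hrel : 9 * s * M ^ 2 * (1 - v ^ 2) = 8 * Q ^ 2) :
    Λminus M Q s = 81 * M ^ 4 / (256 * Q ^ 6) * lambdaProfile v := by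
  have hs : s ≠ 0 := by rintro rfl; exact hQ (by simpa using hrel.symm)
  rw [Λminus, sqrt_mul_pow_three_eq hv hrel, lambdaProfile]
  field_simp
  linear_combination (96 * (8 * Q ^ 2 + 9 * s * M ^ 2 * (1 - v ^ 2)) - 3456 * s * M ^ 2) * hrel

lemma Λplus_eq (hQ : Q ≠ 0) (hv : 0 ≤ v) (hrel : 9 * s * M ^ 2 * (1 - v ^ 2) = 8 * Q ^ 2) :
    Λplus M Q s = 81 * M ^ 4 / (256 * Q ^ 6) * lambdaProfile (-v) := by
  have hs : s ≠ 0 := by rintro rfl; exact hQ (by simpa using hrel.symm)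
  rw [Λplus, sqrt_mul_pow_three_eq hv hrel, lambdaProfile]
  field_simp
  linear_combination (96 * (8 * Q ^ 2 + 9 * s * M ^ 2 * (1 - v ^ 2)) - 3456 * s * M ^ 2) * hrel

end ClosedForm

section Parametrization

variable {μ s : ℝ}

lemma one_sub_div_nonneg (hμ : 0 ≤ μ) (hs : μ < s) : 0 ≤ 1 - μ / s :=
  sub_nonneg.2 <| (div_le_one (hμ.trans_lt hs)).2 hs.le

lemma mul_one_sub_sq_sqrt_one_sub_div (hμ : 0 ≤ μ) (hs : μ < s) :
    s * (1 - √(1 - μ / s) ^ 2) = μ := by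
  rw [Real.sq_sqrt (one_sub_div_nonneg hμ hs)]
  field_simp [(hμ.trans_lt hs).ne']
  ring

lemma sqrt_one_sub_div_lt_one (hμ : 0 < μ) (hs : μ < s) : √(1 - μ / s) < 1 :=
  (Real.sqrt_lt' one_pos).2 <| by
    have := div_pos hμ (hμ.trans hs)
    linarith

lemma strictMonoOn_sqrt_one_sub_div (hμ : 0 < μ) :
    StrictMonoOn (fun s => √(1 - μ / s)) (Ioi μ) := by
  intro s₁ (h₁ : μ < s₁) s₂ _ h₁₂
  refine Real.sqrt_lt_sqrt (one_sub_div_nonneg hμ.le h₁) ?_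
  have := div_lt_div_of_pos_left hμ (hμ.trans h₁) h₁₂
  linarith

end Parametrization

theorem Lambda_pm_strictly_decreasing_general (M Q μ : ℝ)
    (hM : 0 < M) (hQ : Q ≠ 0) (hμ : μ = 8 * Q ^ 2 / (9 * M ^ 2)) :
    ∀ s₁ s₂ : ℝ, μ < s₁ → s₁ < s₂ → s₂ ≤ 1 →
      Λminus M Q s₂ < Λminus M Q s₁ ∧ Λplus M Q s₂ < Λplus M Q s₁ := by
  intro s₁ s₂ h₁ h₁₂ _
  have hμ₀ : 0 < μ := by rw [hμ]; positivity
  have h₂ : μ < s₂ := h₁.trans h₁₂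
  have hrel : ∀ s, μ < s → 9 * s * M ^ 2 * (1 - √(1 - μ / s) ^ 2) = 8 * Q ^ 2 := fun s hs =>
    calc 9 * s * M ^ 2 * (1 - √(1 - μ / s) ^ 2)
        = 9 * M ^ 2 * (s * (1 - √(1 - μ / s) ^ 2)) := by ring
      _ = 8 * Q ^ 2 := by
        rw [mul_one_sub_sq_sqrt_one_sub_div hμ₀.le hs, hμ]
        field_simp
  set v₁ := √(1 - μ / s₁)
  set v₂ := √(1 - μ / s₂)
  have hv₁ : 0 ≤ v₁ := Real.sqrt_nonneg _
  have hv₁₂ : v₁ < v₂ := strictMonoOn_sqrt_one_sub_div hμ₀ h₁ h₂ h₁₂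
  have hv₂ : v₂ < 1 := sqrt_one_sub_div_lt_one hμ₀ h₂
  have hC : 0 < 81 * M ^ 4 / (256 * Q ^ 6) := by positivity
  rw [Λminus_eq hQ hv₁ (hrel s₁ h₁), Λminus_eq hQ (hv₁.trans hv₁₂.le) (hrel s₂ h₂),
    Λplus_eq hQ hv₁ (hrel s₁ h₁), Λplus_eq hQ (hv₁.trans hv₁₂.le) (hrel s₂ h₂)]
  refine ⟨mul_lt_mul_of_pos_left ?_ hC, mul_lt_mul_of_pos_left ?_ hC⟩
  · exact strictAntiOn_lambdaProfile hv₁ (hv₁.trans hv₁₂.le) hv₁₂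
  · exact strictMonoOn_lambdaProfile ⟨by linarith, by linarith⟩ ⟨by linarith, by linarith⟩
      (neg_lt_neg hv₁₂)

/-- For `μ = 8Q²/(9M²) < 1`, both `s ↦ Λ₋(s)` and `s ↦ Λ₊(s)` are strictly decreasing
on `(μ, 1]`. -/
theorem Lambda_pm_strictly_decreasing (M Q μ : ℝ)
    (hM : 0 < M) (hQ : Q ≠ 0) (hμ : μ = 8 * Q ^ 2 / (9 * M ^ 2)) (hμ1 : μ < 1) :
    ∀ s₁ s₂ : ℝ, μ < s₁ → s₁ < s₂ → s₂ ≤ 1 →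
      Λminus M Q s₂ < Λminus M Q s₁ ∧ Λplus M Q s₂ < Λplus M Q s₁ :=
  Lambda_pm_strictly_decreasing_general M Q μ hM hQ hμ
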